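/- For every integer p ≥ 1 and every i ∈ ℤ/nℤ, the operator a_p commutes with the Chevalley operators: [a_p, e_i^T] = 0 and [a_p, f_i^T] = 0 as operators on N. -/

import Mathlib

/-!
Common setup: raiz for the cyclic quiver `Ã_{n-1}`, the polynomial algebra
`N = ℚ[x_θ : θ ∈ R⁺(n)]`, and the locally finite differential operators
`E(θ)`, `Ẽ(θ)`, `B(θ)`, `𝔅_i`, `𝔈_i`, `Δ_i`, and the Chevalley operators
`e_i^T`, `h_i^T`, `f_i^T`, following Finkelberg–Kuznetsov.
-/

open MvPolynomial

/-- A raiz for the cyclic quiver with `n` vertices: a pair `(p,q)` of integers with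
`p ≤ q`, modulo simultaneous translation of both entries by `n`; it is faithfully
encoded by the ending class `q mod n : ZMod n` together with the (positive) length
`q - p + 1 : ℕ+`. -/
abbrev Raiz (n : ℕ) : Type := ZMod n × ℕ+

namespace Raiz

variable {n : ℕ}

/-- The class at which a raiz begins: for `(p,q)` this is `p mod n = (q - len + 1) mod n`. -/
def beg (θ : Raiz n) : ZMod n := θ.1 - ((θ.2 : ℕ) : ZMod n) + 1

/-- `θ = (p,q)` ends at `i` iff `q ≡ i (mod n)`. -/
def Ends (θ : Raiz n) (i : ZMod n) : Prop := θ.1 = i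

/-- `θ = (p,q)` begins at `i` iff `p ≡ i (mod n)`. -/
def Begins (θ : Raiz n) (i : ZMod n) : Prop := beg θ = i

/-- The simple raiz `(i,i)`. -/
def simple (i : ZMod n) : Raiz n := (i, 1)

/-- The concatenation `ϑ⌣θ`: it is defined (`some`) exactly when `θ` begins at the
class following the class at which `ϑ` ends; for `ϑ = (a,b)` ending at `i-1` and
`θ = (p,q)` beginning at `i` it is `(a, b+q-p+1)`, i.e. it ends where `θ` ends and
its length is the sum of the lengths. -/
def cat (ϑ θ : Raiz n) : Option (Raiz n) :=
  if beg θ = ϑ.1 + 1 then some (θ.1, ϑ.2 + θ.2) else none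

/-- `dimAt θ j` is the number of integers in `[p,q]` congruent to `j` mod `n`:
the dimension vector `dim θ ∈ ℕ^{ℤ/nℤ}` of the raiz `θ`. -/
def dimAt (θ : Raiz n) (j : ZMod n) : ℕ :=
  ((Finset.range (θ.2 : ℕ)).filter (fun t => θ.1 - ((t : ℕ) : ZMod n) = j)).card

end Raiz

/-- The polynomial algebra `N = ℚ[x_θ : θ ∈ R⁺(n)]`. -/
abbrev Pol (n : ℕ) := MvPolynomial (Raiz n) ℚ

/-- Operators on `N`. -/
abbrev Op (n : ℕ) := Pol n → Pol n

noncomputable section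

/-- The locally finite differential operator `Σ_η c(η)·∂/∂x_η`: applied to a
polynomial `P` only the (finitely many) variables occurring in `P` contribute,
since `∂P/∂x_η = 0` for `η ∉ vars P`. -/
def diffOp {n : ℕ} (c : Raiz n → Pol n) : Op n :=
  fun P => ∑ η ∈ P.vars, c η * pderiv η P

/-- `Ẽ(θ) = Σ_{ϑ ∈ E_{i-1}} x_ϑ ∂/∂x_{ϑ⌣θ}` for a raiz `θ` beginning at `i`: the
term `ϑ = 0` contributes `∂/∂x_θ` (as `x_0 = 1` and `0⌣θ = θ`), and a nonzero `ϑ`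
ending at `i-1` contributes at the variable `η = ϑ⌣θ`, i.e. at `η` with the same
end as `θ` and `len η > len θ`, with coefficient `x_ϑ`, where
`ϑ = (beg θ - 1, len η - len θ)`. -/
def Etil {n : ℕ} (θ : Raiz n) : Op n :=
  diffOp (fun η =>
    if η = θ then 1
    else if η.1 = θ.1 ∧ θ.2 < η.2 then X ((Raiz.beg θ - 1, η.2 - θ.2) : Raiz n) else 0)

/-- `E(θ) = Σ_{ϑ ∈ E_{i-1}} x_{ϑ⌣θ} ∂/∂x_ϑ` for a raiz `θ` beginning at `i`
(the `ϑ = 0` term vanishes since `∂/∂x_0 = 0`). -/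
def Eop {n : ℕ} (θ : Raiz n) : Op n :=
  diffOp (fun ϑ => if ϑ.1 = Raiz.beg θ - 1 then X ((θ.1, ϑ.2 + θ.2) : Raiz n) else 0)

/-- `B(θ) = Σ_{ϑ ∈ B_{i+1}} x_{θ⌣ϑ} ∂/∂x_ϑ` for a raiz `θ` ending at `i`
(the `ϑ = 0` term vanishes since `∂/∂x_0 = 0`). -/
def Bop {n : ℕ} (θ : Raiz n) : Op n :=
  diffOp (fun ϑ => if Raiz.beg ϑ = θ.1 + 1 then X ((ϑ.1, θ.2 + ϑ.2) : Raiz n) else 0)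

/-- `𝔅_i = Σ_{0 ≠ θ ∈ B_{i+1}} x_θ ∂/∂x_θ`. -/
def Bfrak {n : ℕ} (i : ZMod n) : Op n :=
  diffOp (fun θ => if Raiz.beg θ = i + 1 then X θ else 0)

/-- `𝔈_i = Σ_{0 ≠ θ ∈ E_{i-1}} x_θ ∂/∂x_θ`. -/
def Efrak {n : ℕ} (i : ZMod n) : Op n :=
  diffOp (fun θ => if θ.1 = i - 1 then X θ else 0)

/-- The commutator `[f,g] = f∘g - g∘f` of two operators. -/
def brak {n : ℕ} (f g : Op n) : Op n := fun P => f (g P) - g (f P)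

/-- Multiplication by `x_θ` as an operator on `N`. -/
def mulX {n : ℕ} (θ : Raiz n) : Op n := fun P => X θ * P

/-- Extend a raiz-indexed family of operators to `Option (Raiz n)`: a term with
an undefined concatenation is declared to be `0`. -/
def opt {n : ℕ} (F : Raiz n → Op n) : Option (Raiz n) → Op n
  | none => 0
  | some θ => F θ

/-- `Δ_i = 𝔅_{i-1} - 𝔅_i + c_i`, for a fixed family of constants `c`. -/
def Delta {n : ℕ} (c : ZMod n → ℚ) (i : ZMod n) : Op n :=
  fun P => Bfrak (i - 1) P - Bfrak i P + c i • P

/-- The Chevalley operator `e_i^T = Ẽ(i)`. -/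
def eT {n : ℕ} (i : ZMod n) : Op n := Etil (Raiz.simple i)

/-- The Chevalley operator `h_i^T = 𝔈_{i+1} - 𝔈_i + Δ_i`. -/
def hT {n : ℕ} (c : ZMod n → ℚ) (i : ZMod n) : Op n :=
  fun P => Efrak (i + 1) P - Efrak i P + Delta c i P

/-- The Chevalley operator `f_i^T = B(i) - E(i) + x_i·Δ_i`. -/
def fT {n : ℕ} (c : ZMod n → ℚ) (i : ZMod n) : Op n :=
  fun P => Bop (Raiz.simple i) P - Eop (Raiz.simple i) P + X (Raiz.simple i) * Delta c i P

/-- The affine Cartan matrix of type `Ã_{n-1}` (for `n ≥ 2`): `a_ii = 2`;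
`a_ij = -1` if `j = i±1` and `n ≠ 2`; `a_ij = -2` if `n = 2` and `j = i+1 ≠ i`;
`a_ij = 0` otherwise. -/
def cartan (n : ℕ) (i j : ZMod n) : ℤ :=
  if j = i then 2
  else if n = 2 then -2
  else if j = i + 1 ∨ j = i - 1 then -1
  else 0

/-- The projection `ζ : R⁺(m) → R⁺(n)` for `n ∣ m`: the class of `(p,q)` modulo `m`
is sent to its class modulo `n`. -/
def Raiz.zetaR {n m : ℕ} (h : n ∣ m) : Raiz m → Raiz n :=
  fun θ => (ZMod.castHom h (ZMod n) θ.1, θ.2)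

/-- The induced `ℚ`-algebra homomorphism `ζ : ℚ[x_ϑ : ϑ ∈ R⁺(m)] → ℚ[x_θ : θ ∈ R⁺(n)]`,
`x_ϑ ↦ x_{ζ(ϑ)}`. -/
def zeta {n m : ℕ} (h : n ∣ m) : Pol m →ₐ[ℚ] Pol n :=
  MvPolynomial.rename (Raiz.zetaR h)

/-- The natural-number representatives in `[0, m)` of the residues `≡ i (mod n)`:
for `n ∣ m` these enumerate (via `ℕ → ZMod m`) exactly the classes `j ∈ ℤ/mℤ` with
`j ≡ i (mod n)`. -/
def fiber (n m : ℕ) (i : ZMod n) : Finset ℕ :=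
  (Finset.range m).filter (fun t => ((t : ZMod n) = i))

/-- All raiz of level `n` with length at most `m`. -/
def raizUpTo (n m : ℕ) : Finset (Raiz n) :=
  ((Finset.range n).image (fun a : ℕ => ((a : ZMod n)))) ×ˢ
    ((Finset.range m).image (fun l : ℕ => (⟨l + 1, Nat.succ_pos l⟩ : ℕ+)))

open Classical in
/-- Kostant partitions of the dimension vector `γ`, as multisets `κ` of raiz with
`Σ_{θ ∈ κ} dim θ = γ`; the parameter `m` bounds the lengths of parts and the
multiplicities, so for `Σ_j γ(j) ≤ m` this is the set of all Kostant partitions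
of `γ`. -/
def kostant (n : ℕ) (γ : ZMod n → ℕ) (m : ℕ) : Finset (Multiset (Raiz n)) :=
  ((m • (raizUpTo n m).val).powerset.toFinset).filter
    (fun κ => ∀ j, (κ.map (fun θ => θ.dimAt j)).sum = γ j)

/-- The monomial `x^κ` attached to a Kostant partition `κ`. -/
def xPow {n : ℕ} (κ : Multiset (Raiz n)) : Pol n :=
  (κ.map (fun θ => (X θ : Pol n))).prod

/-- `P_n = Σ_{κ ∈ 𝔎(α_n)} (-1)^{K(κ)+1} x^κ`: the sum is over all Kostant partitions
of the all-ones dimension vector `α_n` (all of whose parts have length `≤ n` and which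
have at most `n` parts). -/
def Ppoly (n : ℕ) : Pol n :=
  ∑ κ ∈ kostant n (fun _ => 1) n, ((-1 : ℚ) ^ (Multiset.card κ + 1)) • xPow κ

open Classical in
/-- `a_p = Σ_{θ : dim θ = p·α_n} Ẽ(θ)` for `p ≥ 1` (a finite sum: such `θ` have
length `p·n`). -/
def aPos (n p : ℕ) : Op n :=
  fun P => ∑ θ ∈ (raizUpTo n (p * n)).filter (fun θ => ∀ j, θ.dimAt j = p), Etil θ P

/-- `a_{-p}`: `c₀` times the operator of multiplication by `ζ(P_{pn})`, for `p ≥ 1`. -/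
def aNeg (n : ℕ) (c₀ : ℚ) (p : ℕ) : Op n :=
  fun P => c₀ • (zeta (dvd_mul_left n p) (Ppoly (p * n)) * P)

end


/-!
All the operators are derivations of `N` (up to the multiplication `c_i x_i` in `f_i^T`), and two
derivations of a polynomial algebra commute once they commute on the generators. On `x_η`, `Ẽ(θ)`
cuts `θ` off the right end of `η`: the result is `x_0 = 1` when nothing is left, and `0` when `η`
is too short or does not end where `θ` ends. Summing over the `θ` of length `pn` makes `a_p` cut
the last `pn` boxes of `η`, whatever its end. Since `pn ≡ 0 (mod n)`, this cut keeps both the end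
class and the beginning class of `η`. So `a_p` commutes on generators with `e_i^T`, which cuts one
more box, and with the parts of `f_i^T` that act at the two ends of a long raiz; and `a_p` kills
`x_i`. For raiz of length `pn - 1` or `pn` the boundary terms of `B(i)`, `E(i)` and
`x_i (𝔅_{i-1} - 𝔅_i)` cancel.
-/

open MvPolynomial

theorem Derivation.finset_sum_apply {ι R A M : Type*} [CommSemiring R] [CommSemiring A]
    [AddCommMonoid M] [Algebra R A] [Module A M] [Module R M] (s : Finset ι)
    (D : ι → Derivation R A M) (a : A) : (∑ i ∈ s, D i) a = ∑ i ∈ s, D i a := by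
  rw [← coeFnAddMonoidHom_apply, map_sum, Finset.sum_apply]
  rfl

namespace MvPolynomial

variable {σ R : Type*} [CommRing R]

theorem mkDerivation_sum_apply {ι : Type*} (s : Finset ι) (f : ι → σ → MvPolynomial σ R)
    (P : MvPolynomial σ R) :
    ∑ i ∈ s, mkDerivation R (f i) P = mkDerivation R (∑ i ∈ s, f i) P := by
  rw [← Derivation.finset_sum_apply]
  refine (derivation_eq_of_forall_mem_vars fun j _ => ?_).symm
  simp [Derivation.finset_sum_apply]

theorem mkDerivation_apply_comm {f g : σ → MvPolynomial σ R}
    (h : ∀ i, mkDerivation R f (g i) = mkDerivation R g (f i)) (P : MvPolynomial σ R) :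
    mkDerivation R f (mkDerivation R g P) = mkDerivation R g (mkDerivation R f P) := by
  have hbracket : ⁅mkDerivation R f, mkDerivation R g⁆ = 0 := by
    ext i
    rw [Derivation.commutator_apply, mkDerivation_X, mkDerivation_X, h, sub_self]
    rfl
  rw [← sub_eq_zero, ← Derivation.commutator_apply, hbracket]
  rfl

end MvPolynomial

theorem PNat.le_or_exists_eq_add (l k : ℕ+) : l ≤ k ∨ ∃ m, l = k + m := by
  rcases le_or_gt l k with h | h
  · exact Or.inl h
  · exact Or.inr ⟨l - k, (PNat.add_sub_of_lt h).symm⟩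

theorem ZMod.card_filter_range_mul_natCast_eq {n : ℕ} [NeZero n] (p : ℕ) (c : ZMod n) :
    ((Finset.range (p * n)).filter fun t : ℕ => (t : ZMod n) = c).card = p := by
  have hmod (t : ℕ) : (t : ZMod n) = c ↔ t ≡ c.val [MOD n] := by
    rw [← ZMod.natCast_eq_natCast_iff, ZMod.natCast_zmod_val]
  simp_rw [hmod, ← Nat.count_eq_card_filter_range, Nat.count_modEq_card _ (NeZero.pos n)]
  simp [NeZero.ne n]

variable {n : ℕ}

namespace Raiz

theorem sum_dimAt [NeZero n] (θ : Raiz n) : ∑ j, θ.dimAt j = (θ.2 : ℕ) := by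
  rw [← Finset.card_range (θ.2 : ℕ), Finset.card_eq_sum_card_fiberwise
    (f := fun t : ℕ => θ.1 - (t : ZMod n)) fun _ _ => Finset.mem_univ _]
  rfl

theorem dimAt_eq_const_iff [NeZero n] (θ : Raiz n) (p : ℕ) :
    (∀ j, θ.dimAt j = p) ↔ (θ.2 : ℕ) = p * n := by
  constructor
  · intro h
    rw [← sum_dimAt, Finset.sum_congr rfl fun j _ => h j]
    simp [mul_comm]
  · intro h j
    rw [dimAt, h]
    refine (congrArg Finset.card (Finset.filter_congr fun t _ => ?_)).trans
      (ZMod.card_filter_range_mul_natCast_eq p (θ.1 - j))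
    rw [sub_eq_iff_eq_add, eq_sub_iff_add_eq, eq_comm, add_comm]

theorem mem_raizUpTo [NeZero n] (θ : Raiz n) (m : ℕ) : θ ∈ raizUpTo n m ↔ (θ.2 : ℕ) ≤ m := by
  have hend : θ.1 ∈ (Finset.range n).image (fun a : ℕ => (a : ZMod n)) :=
    Finset.mem_image.mpr ⟨θ.1.val, Finset.mem_range.mpr (ZMod.val_lt _), ZMod.natCast_zmod_val _⟩
  rw [raizUpTo]
  refine Finset.mem_product.trans ?_
  simp only [hend, true_and, Finset.mem_image, Finset.mem_range]
  constructor
  · rintro ⟨l, hl, hθ⟩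
    rw [← hθ]
    exact hl
  · intro h
    exact ⟨θ.2.natPred, by have := θ.2.pos; rw [PNat.natPred]; omega, PNat.succPNat_natPred _⟩

theorem beg_one (a : ZMod n) : beg (a, 1) = a := by
  simp [beg]

theorem beg_add {k : ℕ+} (hk : ((k : ℕ) : ZMod n) = 0) (a : ZMod n) (m : ℕ+) :
    beg (a, k + m) = beg (a, m) := by
  simp [beg, hk]

/-- Cutting the last `k` boxes off a raiz; `1` stands for `x_0`. -/
noncomputable def cut (k : ℕ+) (η : Raiz n) : Pol n :=
  if η.2 = k then 1 else if k < η.2 then X (η.1 - ((k : ℕ) : ZMod n), η.2 - k) else 0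

noncomputable def cutAt (i : ZMod n) (k : ℕ+) (η : Raiz n) : Pol n :=
  if η.1 = i then cut k η else 0

theorem cut_self (k : ℕ+) (a : ZMod n) : cut k (a, k) = 1 := if_pos rfl

theorem cut_add (k m : ℕ+) (a : ZMod n) :
    cut k (a, k + m) = X (a - ((k : ℕ) : ZMod n), m) := by
  have hk : k < k + m := PNat.lt_add_right k m
  rw [cut, if_neg hk.ne', if_pos hk, add_comm, PNat.add_sub]

theorem cut_of_lt {k : ℕ+} {η : Raiz n} (h : η.2 < k) : cut k η = 0 := by
  rw [cut, if_neg h.ne, if_neg h.not_gt]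

theorem cut_sub_add (k k' m : ℕ+) (a : ZMod n) :
    cut k' (a - ((k : ℕ) : ZMod n), m) = cut (k + k') (a, k + m) := by
  rcases lt_trichotomy m k' with h | rfl | h
  · rw [cut_of_lt h, cut_of_lt ((add_lt_add_iff_left k).mpr h)]
  · rw [cut_self, cut_self]
  · obtain ⟨m', rfl⟩ := (PNat.le_or_exists_eq_add m k').resolve_left h.not_ge
    rw [cut_add, ← add_assoc, cut_add, PNat.add_coe, Nat.cast_add, sub_sub]

theorem mkDerivation_cut_of_le (c : Raiz n → Pol n) {k : ℕ+} {η : Raiz n} (h : η.2 ≤ k) :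
    mkDerivation ℚ c (cut k η) = 0 := by
  rcases h.lt_or_eq with h | h
  · rw [cut_of_lt h, map_zero]
  · rw [cut, if_pos h, Derivation.map_one_eq_zero]

theorem mkDerivation_cut_cut (k k' : ℕ+) (η : Raiz n) :
    mkDerivation ℚ (cut k') (cut k η) = cut (k + k') η := by
  obtain ⟨a, l⟩ := η
  rcases PNat.le_or_exists_eq_add l k with h | ⟨m, rfl⟩
  · rw [mkDerivation_cut_of_le _ h, cut_of_lt (h.trans_lt (PNat.lt_add_right k k'))]
  · rw [cut_add, mkDerivation_X, cut_sub_add]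

theorem mkDerivation_cutAt_cut (i : ZMod n) (k k' : ℕ+) (η : Raiz n) :
    mkDerivation ℚ (cutAt i k') (cut k η)
      = if η.1 - ((k : ℕ) : ZMod n) = i then cut (k + k') η else 0 := by
  obtain ⟨a, l⟩ := η
  rcases PNat.le_or_exists_eq_add l k with h | ⟨m, rfl⟩
  · rw [mkDerivation_cut_of_le _ h, cut_of_lt (h.trans_lt (PNat.lt_add_right k k')), ite_self]
  · rw [cut_add, mkDerivation_X, cutAt, cut_sub_add]

theorem mkDerivation_cut_X_simple {M : ℕ+} (hM : 1 < M) (i : ZMod n) :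
    mkDerivation ℚ (cut M) (X (simple i)) = 0 := by
  rw [mkDerivation_X]
  exact cut_of_lt hM

end Raiz

open Raiz

noncomputable def fTCoeff (i : ZMod n) (ϑ : Raiz n) : Pol n :=
  (if ϑ.beg = i + 1 then X (ϑ.1, 1 + ϑ.2) else 0) - (if ϑ.1 = i - 1 then X (i, ϑ.2 + 1) else 0)
    + X (simple i) * ((if ϑ.beg = i then X ϑ else 0) - (if ϑ.beg = i + 1 then X ϑ else 0))

theorem diffOp_eq_mkDerivation (c : Raiz n → Pol n) : diffOp c = mkDerivation ℚ c := by
  funext P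
  have hD (Q : Pol n) :
      (∑ η ∈ P.vars, c η • pderiv η) Q = ∑ η ∈ P.vars, c η * pderiv η Q := by
    simp [Derivation.finset_sum_apply]
  rw [diffOp, ← hD]
  refine derivation_eq_of_forall_mem_vars fun η hη => ?_
  simp [hD, pderiv_X, Pi.single_apply, hη]

theorem Etil_eq_mkDerivation (θ : Raiz n) : Etil θ = mkDerivation ℚ (cutAt θ.1 θ.2) := by
  rw [Etil, diffOp_eq_mkDerivation]
  refine congrArg (fun c : Raiz n → Pol n => ⇑(mkDerivation ℚ c)) (_root_.funext fun η => ?_)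
  obtain ⟨b, k⟩ := θ
  obtain ⟨a, l⟩ := η
  simp only [cutAt, cut, beg, Prod.mk.injEq, add_sub_cancel_right]
  split_ifs <;> simp_all

theorem aPos_eq_mkDerivation [NeZero n] {p : ℕ} {M : ℕ+} (hM : (M : ℕ) = p * n) :
    aPos n p = mkDerivation ℚ (cut M) := by
  have hmem (θ : Raiz n) : (θ ∈ raizUpTo n (p * n) ∧ ∀ j, θ.dimAt j = p) ↔ θ.2 = M := by
    rw [mem_raizUpTo, dimAt_eq_const_iff, ← hM, PNat.coe_inj]
    exact ⟨And.right, fun h => ⟨(congrArg _ h).le, h⟩⟩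
  funext P
  simp only [aPos, Etil_eq_mkDerivation, mkDerivation_sum_apply]
  congr 2
  funext η
  rw [Finset.sum_apply, Finset.sum_eq_single_of_mem (η.1, M)]
  · exact if_pos rfl
  · simp only [Finset.mem_filter, hmem]
  · intro θ hθ hne
    simp only [Finset.mem_filter, hmem] at hθ
    exact if_neg fun hend => hne (Prod.ext hend.symm hθ)

theorem fT_apply (c : ZMod n → ℚ) (i : ZMod n) (P : Pol n) :
    fT c i P = mkDerivation ℚ (fTCoeff i) P + c i • (X (simple i) * P) := by
  rw [← diffOp_eq_mkDerivation, fT, Delta, mul_add, mul_smul_comm, ← add_assoc, add_left_inj]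
  simp only [Bop, Eop, Bfrak, diffOp, Finset.mul_sum, ← Finset.sum_sub_distrib,
    ← Finset.sum_add_distrib]
  refine Finset.sum_congr rfl fun ϑ _ => ?_
  have hsimple : simple i = (i, 1) := rfl
  simp only [fTCoeff, hsimple, beg_one, sub_add_cancel]
  ring

theorem mkDerivation_cut_cutAt_comm {M : ℕ+} (hM : ((M : ℕ) : ZMod n) = 0) (i : ZMod n)
    (k : ℕ+) (η : Raiz n) :
    mkDerivation ℚ (cut M) (cutAt i k η) = mkDerivation ℚ (cutAt i k) (cut M η) := by
  rw [mkDerivation_cutAt_cut, hM, sub_zero, cutAt, add_comm]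
  split_ifs
  · exact mkDerivation_cut_cut k M η
  · exact map_zero _

theorem mkDerivation_cut_fTCoeff_comm {M : ℕ+} (hM0 : ((M : ℕ) : ZMod n) = 0) (hM : 1 < M)
    (i : ZMod n) (ϑ : Raiz n) :
    mkDerivation ℚ (cut M) (fTCoeff i ϑ) = mkDerivation ℚ (fTCoeff i) (cut M ϑ) := by
  obtain ⟨a, l⟩ := ϑ
  simp only [fTCoeff, map_add, map_sub, Derivation.leibniz, mkDerivation_cut_X_simple hM,
    mul_zero, add_zero, apply_ite (mkDerivation ℚ (cut M)), mkDerivation_X, map_zero, smul_eq_mul]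
  rcases PNat.le_or_exists_eq_add l M with hl | ⟨m, rfl⟩
  · rw [mkDerivation_cut_of_le _ hl]
    rcases hl.lt_or_eq with hl | rfl
    · rw [cut_of_lt (η := (a, l)) hl]
      rcases (PNat.add_one_le_iff.mpr hl).lt_or_eq with hl' | rfl
      · rw [add_comm 1 l, cut_of_lt hl', cut_of_lt hl']
        simp
      · have hbeg : beg (a, l) = i + 1 ↔ a = i - 1 := by
          rw [PNat.add_coe, PNat.one_coe, Nat.cast_add, Nat.cast_one] at hM0
          rw [beg]
          constructor <;> intro h
          · linear_combination h + hM0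
          · linear_combination h - hM0
        rw [add_comm 1 l, cut_self, cut_self]
        simp [hbeg]
    · rw [add_comm 1 l, cut_add, cut_add, cut_self, hM0, sub_zero, sub_zero, beg, hM0, sub_zero]
      simp only [← eq_sub_iff_add_eq, simple]
      split_ifs <;> subst_vars <;> simp
  · rw [add_left_comm 1 M m, add_assoc M m 1, cut_add, cut_add, cut_add, mkDerivation_X, hM0,
      sub_zero, sub_zero, beg_add hM0, fTCoeff]

/-- For every `p ≥ 1` and every `i ∈ ℤ/nℤ`, the operator `a_p` commutes with the
Chevalley operators: `[a_p, e_i^T] = 0` and `[a_p, f_i^T] = 0`. -/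
theorem aPos_commutes_with_chevalley {n : ℕ} (hn : 2 ≤ n) (c : ZMod n → ℚ)
    (p : ℕ) (hp : 1 ≤ p) (i : ZMod n) :
    brak (aPos n p) (eT i) = 0 ∧ brak (aPos n p) (fT c i) = 0 := by
  have : NeZero n := ⟨by omega⟩
  set M : ℕ+ := ⟨p * n, Nat.mul_pos hp (by omega)⟩
  have hM0 : ((M : ℕ) : ZMod n) = 0 := by simp [M]
  have hM : 1 < M := by change 1 < p * n; nlinarith
  rw [aPos_eq_mkDerivation (M := M) rfl]
  refine ⟨funext fun P => ?_, funext fun P => ?_⟩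
  · rw [brak, eT, Etil_eq_mkDerivation, Pi.zero_apply, sub_eq_zero]
    exact mkDerivation_apply_comm (mkDerivation_cut_cutAt_comm hM0 i 1) P
  · rw [brak, fT_apply, fT_apply, Pi.zero_apply, map_add, Derivation.map_smul, Derivation.leibniz,
      mkDerivation_cut_X_simple hM, smul_zero, add_zero,
      mkDerivation_apply_comm (mkDerivation_cut_fTCoeff_comm hM0 hM i) P, smul_eq_mul, sub_self]
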